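/- Let $\alpha$ be real, $a \in \mathbb{Z}$, $q \in \mathbb{N}$ with $\gcd(a,q) = 1$ and $|\alpha - a/q| \le 1/q^2$. Then for any real $N \ge 1$ and any real $V \ge 1$, $\sum_{u \le N} \min\left( V, \frac{1}{\|\alpha u\|} \right) \ll \left( \frac{N}{q} + 1 \right) (V + q \log q)$, where the implied constant is absolute and the term $1/\|\alpha u\|$ is interpreted as $V$ when $\|\alpha u\| = 0$ or $1/\|\alpha u\| > V$. -/

import Mathlib

/-- Distance from `y` to the nearest integer. -/
noncomputable def nint (y : ℝ) : ℝ := |y - round y|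

lemma nint_nonneg (y : ℝ) : 0 ≤ nint y := abs_nonneg _

lemma nint_le (y : ℝ) (n : ℤ) : nint y ≤ |y - n| := round_le y n

lemma nint_le_half (y : ℝ) : nint y ≤ 1/2 := abs_sub_round y

lemma nint_add_int (y : ℝ) (n : ℤ) : nint (y + n) = nint y := by
  unfold nint; rw [round_add_intCast]; push_cast; ring_nf

lemma nint_lip (x y : ℝ) : nint x ≤ nint y + |x - y| := by
  calc nint x ≤ |x - round y| := nint_le x _
  _ ≤ |x - y| + |y - round y| := abs_sub_le x y _
  _ = nint y + |x - y| := by rw [nint]; ring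

lemma count_interval (q : ℕ) (hq : 0 < q) (lo hi : ℝ) (hlh : lo ≤ hi) :
    (((Finset.range q).filter (fun r : ℕ => lo ≤ (r:ℝ)/q ∧ (r:ℝ)/q < hi)).card : ℝ)
      ≤ q * (hi - lo) + 1 := by
  have hq' : (0:ℝ) < q := by exact_mod_cast hq
  set A := (Finset.range q).filter (fun r : ℕ => lo ≤ (r:ℝ)/q ∧ (r:ℝ)/q < hi) with hA
  rcases A.eq_empty_or_nonempty with h | h
  · simp [h]
    nlinarith
  · set m := A.min' h with hm
    have hmA : m ∈ A := A.min'_mem h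
    have hmlo : lo ≤ (m:ℝ)/q := ((Finset.mem_filter.mp hmA).2).1
    have hsub : A ⊆ Finset.Icc m (m + ⌊q * (hi - lo)⌋₊) := by
      intro r hr
      have h1 : m ≤ r := A.min'_le r hr
      have h2 : ((r:ℝ))/q < hi := ((Finset.mem_filter.mp hr).2).2
      have h3 : ((r - m : ℕ) : ℝ) ≤ q * (hi - lo) := by
        rw [Nat.cast_sub h1]
        have : (r:ℝ)/q - (m:ℝ)/q < hi - lo := by linarith
        rw [div_sub_div_same, div_lt_iff₀ hq'] at this
        linarith
      have h4 := Nat.le_floor h3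
      simp only [Finset.mem_Icc]
      omega
    have h5 := Finset.card_le_card hsub
    have hcard : (Finset.Icc m (m + ⌊q * (hi - lo)⌋₊)).card = ⌊q * (hi - lo)⌋₊ + 1 := by
      rw [Nat.card_Icc]; omega
    have hfl : (⌊q * (hi - lo)⌋₊ : ℝ) ≤ q * (hi - lo) := Nat.floor_le (by nlinarith)
    rw [hcard] at h5
    calc (A.card : ℝ) ≤ ((⌊q * (hi - lo)⌋₊ + 1 : ℕ) : ℝ) := by exact_mod_cast h5
    _ ≤ q * (hi - lo) + 1 := by push_cast; linarith

lemma residue_inj (a : ℤ) (q : ℕ) (hq : 0 < q) (hg : Int.gcd a q = 1)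
    {j₁ j₂ : ℕ} (h1 : j₁ ∈ Finset.Icc 1 q) (h2 : j₂ ∈ Finset.Icc 1 q)
    (h : (a * j₁) % (q:ℤ) = (a * j₂) % (q:ℤ)) : j₁ = j₂ := by
  have hme : Int.ModEq (q:ℤ) (a * j₂) (a * j₁) := h.symm
  have hd : (q:ℤ) ∣ a * j₁ - a * j₂ := hme.dvd
  rw [← mul_sub] at hd
  have hg' : Int.gcd (q:ℤ) a = 1 := by rwa [Int.gcd_comm]
  have hd2 : (q:ℤ) ∣ ((j₁:ℤ) - j₂) := Int.dvd_of_dvd_mul_right_of_gcd_one hd hg'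
  simp only [Finset.mem_Icc] at h1 h2
  have : ((j₁:ℤ) - j₂) = 0 := Int.eq_zero_of_abs_lt_dvd hd2 (by
    rw [abs_lt]
    constructor <;> [skip; skip] <;> push_cast <;> omega)
  omega

lemma annulus_count (a : ℤ) (q : ℕ) (hq : 0 < q) (hg : Int.gcd a q = 1)
    (c s t : ℝ) (hs0 : 0 ≤ s) (hst : s ≤ t) :
    (((Finset.Icc 1 q).filter
        (fun j : ℕ => s ≤ nint (c + a * j / q) ∧ nint (c + a * j / q) < t)).card : ℝ)
      ≤ 8 * (q * (t - s)) + 12 := by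
  have hq' : (0:ℝ) < q := by exact_mod_cast hq
  have h1q : (0:ℝ) < 1/q := by positivity
  set S := (Finset.Icc 1 q).filter
      (fun j : ℕ => s ≤ nint (c + a * j / q) ∧ nint (c + a * j / q) < t) with hS
  set r : ℕ → ℕ := fun j => ((a * j) % (q:ℤ)).toNat with hr
  have hrmod : ∀ j : ℕ, ((r j : ℤ)) = (a * j) % (q:ℤ) := fun j =>
    Int.toNat_of_nonneg (Int.emod_nonneg _ (by exact_mod_cast hq.ne'))
  have hrlt : ∀ j, r j < q := by
    intro j
    have h1 := Int.emod_lt_of_pos (a * j) (show (0:ℤ) < q by exact_mod_cast hq)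
    have h2 := hrmod j
    omega
  have hnint : ∀ j : ℕ, nint (c + (a:ℝ) * j / q) = nint (c + (r j : ℝ) / q) := by
    intro j
    have hdm : (q:ℤ) * ((a * (j:ℤ)) / (q:ℤ)) + (a * (j:ℤ)) % (q:ℤ) = a * (j:ℤ) :=
      Int.mul_ediv_add_emod _ _
    have key : c + (a:ℝ) * j / q = (c + (r j : ℝ)/q) + (((a * (j:ℤ)) / (q:ℤ) : ℤ) : ℝ) := by
      have h1 : ((r j : ℕ) : ℝ) = (((a*(j:ℤ)) % (q:ℤ) : ℤ) : ℝ) := by exact_mod_cast hrmod j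
      have h2 : (a:ℝ) * (j:ℝ)
          = (q:ℝ) * (((a * (j:ℤ)) / (q:ℤ) : ℤ):ℝ) + ((((a*(j:ℤ)) % (q:ℤ)) : ℤ) : ℝ) := by
        exact_mod_cast congrArg (fun z : ℤ => (z:ℝ)) hdm.symm
      rw [← h1] at h2
      field_simp
      linarith [h2]
    rw [key, nint_add_int]
  have hinj : Set.InjOn r ↑S := by
    intro j₁ hj₁ j₂ hj₂ hrj
    simp only [Finset.coe_filter, Set.mem_setOf_eq, hS] at hj₁ hj₂
    refine residue_inj a q hq hg hj₁.1 hj₂.1 ?_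
    rw [← hrmod j₁, ← hrmod j₂, hrj]
  have hcardeq : S.card = (S.image r).card := (Finset.card_image_of_injOn hinj).symm
  obtain ⟨n₀, hn₀⟩ : ∃ z : ℤ, z = round c := ⟨_, rfl⟩
  set F : ℤ → Finset ℕ := fun n =>
      ((Finset.range q).filter
        (fun rr : ℕ => (n:ℝ) - c + s ≤ (rr:ℝ)/q ∧ (rr:ℝ)/q < (n:ℝ) - c + t))
      ∪ ((Finset.range q).filter
        (fun rr : ℕ => (n:ℝ) - c - t ≤ (rr:ℝ)/q ∧ (rr:ℝ)/q < (n:ℝ) - c - s + 1/q)) with hF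
  have hsub : S.image r ⊆ (Finset.Icc (n₀ - 1) (n₀ + 2)).biUnion F := by
    intro rr hrr
    rw [Finset.mem_image] at hrr
    obtain ⟨j, hjS, rfl⟩ := hrr
    rw [hS, Finset.mem_filter] at hjS
    obtain ⟨hjIcc, hjlo, hjhi⟩ := hjS
    rw [hnint j] at hjlo hjhi
    obtain ⟨n, hn⟩ : ∃ z : ℤ, z = round (c + (r j : ℝ)/q) := ⟨_, rfl⟩
    have habs : |(c + (r j : ℝ)/q) - (n:ℝ)| ≤ 1/2 := by rw [hn]; exact abs_sub_round _
    have hjlo' : s ≤ |(c + (r j : ℝ)/q) - (n:ℝ)| := by rw [hn]; exact hjlo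
    have hjhi' : |(c + (r j : ℝ)/q) - (n:ℝ)| < t := by rw [hn]; exact hjhi
    have hc2 : |c - (n₀:ℝ)| ≤ 1/2 := by rw [hn₀]; exact abs_sub_round c
    have hfrac0 : (0:ℝ) ≤ (r j : ℝ)/q := by positivity
    have hfrac1 : (r j : ℝ)/q < 1 := by
      rw [div_lt_one hq']
      exact_mod_cast hrlt j
    rw [abs_le] at habs hc2
    have hnmem : n ∈ Finset.Icc (n₀ - 1) (n₀ + 2) := by
      rw [Finset.mem_Icc]
      constructor
      · have : ((n₀ - 1 : ℤ):ℝ) ≤ (n:ℝ) := by push_cast; linarith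
        exact_mod_cast this
      · have : (n:ℝ) ≤ ((n₀ + 2 : ℤ):ℝ) := by push_cast; linarith
        exact_mod_cast this
    rw [Finset.mem_biUnion]
    refine ⟨n, hnmem, ?_⟩
    rw [hF, Finset.mem_union]
    rcases le_or_gt (n:ℝ) (c + (r j : ℝ)/q) with hside | hside
    · left
      rw [Finset.mem_filter, Finset.mem_range]
      rw [abs_of_nonneg (by linarith : (0:ℝ) ≤ (c + (r j : ℝ)/q) - (n:ℝ))] at hjlo' hjhi'
      exact ⟨hrlt j, by linarith, by linarith⟩
    · right
      rw [Finset.mem_filter, Finset.mem_range]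
      rw [abs_of_neg (by linarith : (c + (r j : ℝ)/q) - (n:ℝ) < 0)] at hjlo' hjhi'
      exact ⟨hrlt j, by linarith, by linarith⟩
  have hFcard : ∀ n : ℤ, ((F n).card : ℝ) ≤ 2 * (q * (t - s)) + 3 := by
    intro n
    have hu := Finset.card_union_le
      ((Finset.range q).filter
        (fun rr : ℕ => (n:ℝ) - c + s ≤ (rr:ℝ)/q ∧ (rr:ℝ)/q < (n:ℝ) - c + t))
      ((Finset.range q).filter
        (fun rr : ℕ => (n:ℝ) - c - t ≤ (rr:ℝ)/q ∧ (rr:ℝ)/q < (n:ℝ) - c - s + 1/q))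
    have hc1 := count_interval q hq ((n:ℝ) - c + s) ((n:ℝ) - c + t) (by linarith)
    have hc2 := count_interval q hq ((n:ℝ) - c - t) ((n:ℝ) - c - s + 1/q) (by linarith)
    have e1 : (n:ℝ) - c + t - ((n:ℝ) - c + s) = t - s := by ring
    have e2 : (q:ℝ) * ((n:ℝ) - c - s + 1/q - ((n:ℝ) - c - t)) = q*(t-s) + 1 := by
      have hq1 : (q:ℝ) * (1/q) = 1 := by field_simp
      rw [show (n:ℝ) - c - s + 1/q - ((n:ℝ) - c - t) = (t - s) + 1/q by ring]
      rw [mul_add, hq1]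
    rw [e1] at hc1
    rw [e2] at hc2
    have hu' : ((F n).card : ℝ) ≤
        (((Finset.range q).filter
          (fun rr : ℕ => (n:ℝ) - c + s ≤ (rr:ℝ)/q ∧ (rr:ℝ)/q < (n:ℝ) - c + t)).card : ℝ)
        + (((Finset.range q).filter
          (fun rr : ℕ => (n:ℝ) - c - t ≤ (rr:ℝ)/q ∧ (rr:ℝ)/q < (n:ℝ) - c - s + 1/q)).card : ℝ) := by
      rw [hF]
      exact_mod_cast hu
    linarith
  have hcc : ((Finset.Icc (n₀-1) (n₀+2)).card : ℝ) = 4 := by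
    rw [Int.card_Icc, show n₀ + 2 + 1 - (n₀ - 1) = 4 from by ring]
    rfl
  calc (S.card : ℝ) = ((S.image r).card : ℝ) := by exact_mod_cast hcardeq
    _ ≤ (((Finset.Icc (n₀ - 1) (n₀ + 2)).biUnion F).card : ℝ) := by
        exact_mod_cast Finset.card_le_card hsub
    _ ≤ ((∑ n ∈ Finset.Icc (n₀-1) (n₀+2), (F n).card : ℕ) : ℝ) := by
        exact_mod_cast Finset.card_biUnion_le
    _ = ∑ n ∈ Finset.Icc (n₀-1) (n₀+2), ((F n).card : ℝ) := by push_cast; rfl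
    _ ≤ ∑ _n ∈ Finset.Icc (n₀-1) (n₀+2), (2 * ((q:ℝ) * (t - s)) + 3) :=
        Finset.sum_le_sum (fun n _ => hFcard n)
    _ = ((Finset.Icc (n₀-1) (n₀+2)).card : ℝ) * (2 * ((q:ℝ) * (t - s)) + 3) := by
        rw [Finset.sum_const, nsmul_eq_mul]
    _ = 4 * (2 * ((q:ℝ) * (t - s)) + 3) := by rw [hcc]
    _ = 8 * (q * (t - s)) + 12 := by ring

lemma block_sum (α : ℝ) (a : ℤ) (q : ℕ) (hq : 0 < q) (hg : Int.gcd a q = 1)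
    (happ : |α - (a:ℝ)/(q:ℝ)| ≤ 1/(q:ℝ)^2) (V : ℝ) (hV : 1 ≤ V) (k : ℕ) :
    (∑ u ∈ Finset.Ioc (k*q) (k*q+q),
      (if nint (α * u) = 0 then V else min V (1 / nint (α * u))))
      ≤ 36*V + 36*((q:ℝ)*(1 + Real.log q)) := by
  have hq' : (0:ℝ) < q := by exact_mod_cast hq
  -- reindex
  have hmap : Finset.Ioc (k*q) (k*q+q)
      = (Finset.Icc 1 q).map ⟨fun j => k*q + j, show Function.Injective (fun j : ℕ => k*q + j) from fun x y h => by
          exact Nat.add_left_cancel h⟩ := by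
    ext u
    simp only [Finset.mem_map, Finset.mem_Ioc, Finset.mem_Icc, Function.Embedding.coeFn_mk]
    constructor
    · intro h
      exact ⟨u - k*q, by omega, by omega⟩
    · rintro ⟨j, hj, rfl⟩
      omega
  rw [hmap, Finset.sum_map]
  simp only [Function.Embedding.coeFn_mk]
  -- Lipschitz comparison
  have hdiff : ∀ j ∈ Finset.Icc 1 q,
      |α * ((k*q + j : ℕ):ℝ) - (α * ((k*q : ℕ):ℝ) + (a:ℝ)*j/q)| ≤ 1/q := by
    intro j hj
    rw [Finset.mem_Icc] at hj
    have E : α * ((k*q + j : ℕ):ℝ) - (α * ((k*q : ℕ):ℝ) + (a:ℝ)*j/q)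
        = (j:ℝ) * (α - (a:ℝ)/q) := by push_cast; ring
    rw [E, abs_mul, abs_of_nonneg (by positivity : (0:ℝ) ≤ (j:ℝ))]
    calc (j:ℝ) * |α - (a:ℝ)/q| ≤ (q:ℝ) * (1/(q:ℝ)^2) := by
          apply mul_le_mul (by exact_mod_cast hj.2) happ (abs_nonneg _) (le_of_lt hq')
    _ = 1/q := by field_simp
  -- fiberwise decomposition
  have hmaps : ∀ j ∈ Finset.Icc 1 q,
      ⌊(q:ℝ) * nint (α * ((k*q + j : ℕ):ℝ))⌋₊ ∈ Finset.range (q+1) := by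
    intro j _
    rw [Finset.mem_range]
    have h0 : (0:ℝ) ≤ (q:ℝ) * nint (α * ((k*q + j : ℕ):ℝ)) := by
      have := nint_nonneg (α * ((k*q + j : ℕ):ℝ)); positivity
    rw [Nat.floor_lt h0]
    have h2 := nint_le_half (α * ((k*q + j : ℕ):ℝ))
    have h3 := mul_le_mul_of_nonneg_left h2 (le_of_lt hq')
    refine lt_of_le_of_lt h3 ?_
    push_cast
    linarith
  rw [← Finset.sum_fiberwise_of_maps_to hmaps
    (fun j => if nint (α * ((k*q + j : ℕ):ℝ)) = 0 then V
      else min V (1 / nint (α * ((k*q + j : ℕ):ℝ))))]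
  -- per-fiber bound
  have hfiber : ∀ m ∈ Finset.range (q+1),
      (∑ j ∈ (Finset.Icc 1 q).filter
          (fun j => ⌊(q:ℝ) * nint (α * ((k*q + j : ℕ):ℝ))⌋₊ = m),
        (if nint (α * ((k*q + j : ℕ):ℝ)) = 0 then V
          else min V (1 / nint (α * ((k*q + j : ℕ):ℝ)))))
      ≤ 36 * (if m = 0 then V else (q:ℝ)/m) := by
    intro m _
    -- each member of the fiber satisfies the annulus condition
    have hmem : ∀ j ∈ (Finset.Icc 1 q).filter
          (fun j => ⌊(q:ℝ) * nint (α * ((k*q + j : ℕ):ℝ))⌋₊ = m),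
        (m:ℝ)/q ≤ nint (α * ((k*q + j : ℕ):ℝ))
          ∧ nint (α * ((k*q + j : ℕ):ℝ)) < ((m:ℝ)+1)/q := by
      intro j hj
      rw [Finset.mem_filter] at hj
      obtain ⟨hjIcc, hjf⟩ := hj
      have h0 : (0:ℝ) ≤ (q:ℝ) * nint (α * ((k*q + j : ℕ):ℝ)) := by
        have := nint_nonneg (α * ((k*q + j : ℕ):ℝ)); positivity
      rw [Nat.floor_eq_iff h0] at hjf
      have hcomm : nint (α * ((k*q + j : ℕ):ℝ)) * q = q * nint (α * ((k*q + j : ℕ):ℝ)) :=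
        mul_comm _ _
      constructor
      · rw [div_le_iff₀ hq']
        linarith [hjf.1]
      · rw [lt_div_iff₀ hq']
        linarith [hjf.2]
    -- card bound via annulus_count
    have hsubset : (Finset.Icc 1 q).filter
          (fun j => ⌊(q:ℝ) * nint (α * ((k*q + j : ℕ):ℝ))⌋₊ = m)
        ⊆ (Finset.Icc 1 q).filter
          (fun j : ℕ => max 0 (((m:ℝ)-1)/q) ≤ nint ((α * ((k*q : ℕ):ℝ)) + a * j / q)
            ∧ nint ((α * ((k*q : ℕ):ℝ)) + a * j / q) < ((m:ℝ)+2)/q) := by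
      intro j hj
      have hj' := hmem j hj
      rw [Finset.mem_filter] at hj ⊢
      have hd := hdiff j hj.1
      have e1 : ((m:ℝ)-1)/q = (m:ℝ)/q - 1/q := by ring
      have e2 : ((m:ℝ)+2)/q = ((m:ℝ)+1)/q + 1/q := by ring
      refine ⟨hj.1, ?_, ?_⟩
      · rw [max_le_iff]
        refine ⟨nint_nonneg _, ?_⟩
        have hl := nint_lip (α * ((k*q + j : ℕ):ℝ)) ((α * ((k*q : ℕ):ℝ)) + a * j / q)
        linarith [hj'.1, hl, hd, e1]
      · have hl := nint_lip ((α * ((k*q : ℕ):ℝ)) + a * j / q) (α * ((k*q + j : ℕ):ℝ))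
        rw [abs_sub_comm] at hl
        linarith [hj'.2, hl, hd, e2]
    have hcard : (((Finset.Icc 1 q).filter
          (fun j => ⌊(q:ℝ) * nint (α * ((k*q + j : ℕ):ℝ))⌋₊ = m)).card : ℝ) ≤ 36 := by
      have hts : ((m:ℝ)+2)/q - max 0 (((m:ℝ)-1)/q) ≤ 3/q := by
        rcases Nat.eq_zero_or_pos m with rfl | hm
        · simp only [Nat.cast_zero]
          have hmx : max 0 ((0-1)/(q:ℝ)) = 0 := by
            rw [max_eq_left]
            apply div_nonpos_of_nonpos_of_nonneg <;> linarith
          rw [hmx]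
          have : ((0:ℝ)+2)/q ≤ 3/q := by
            apply (div_le_div_iff_of_pos_right hq').mpr
            norm_num
          linarith
        · have h1 : (((m:ℝ)-1)/q) ≤ max 0 (((m:ℝ)-1)/q) := le_max_right _ _
          have e : ((m:ℝ)+2)/q - ((m:ℝ)-1)/q = 3/q := by ring
          linarith
      have hst : max 0 (((m:ℝ)-1)/q) ≤ ((m:ℝ)+2)/q := by
        rw [max_le_iff]
        refine ⟨by positivity, ?_⟩
        rw [div_le_div_iff₀ hq' hq']
        nlinarith
      have hac := annulus_count a q hq hg (α * ((k*q : ℕ):ℝ))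
        (max 0 (((m:ℝ)-1)/q)) (((m:ℝ)+2)/q) (le_max_left _ _) hst
      have hcc := Finset.card_le_card hsubset
      have hcc' : (((Finset.Icc 1 q).filter
          (fun j => ⌊(q:ℝ) * nint (α * ((k*q + j : ℕ):ℝ))⌋₊ = m)).card : ℝ)
          ≤ (((Finset.Icc 1 q).filter
          (fun j : ℕ => max 0 (((m:ℝ)-1)/q) ≤ nint ((α * ((k*q : ℕ):ℝ)) + a * j / q)
            ∧ nint ((α * ((k*q : ℕ):ℝ)) + a * j / q) < ((m:ℝ)+2)/q)).card : ℝ) := by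
        exact_mod_cast hcc
      have h3q : (q:ℝ) * (3/q) = 3 := by field_simp
      have hmul := mul_le_mul_of_nonneg_left hts (le_of_lt hq')
      linarith
    -- per-term bound
    have hterm : ∀ j ∈ (Finset.Icc 1 q).filter
          (fun j => ⌊(q:ℝ) * nint (α * ((k*q + j : ℕ):ℝ))⌋₊ = m),
        (if nint (α * ((k*q + j : ℕ):ℝ)) = 0 then V
          else min V (1 / nint (α * ((k*q + j : ℕ):ℝ))))
        ≤ (if m = 0 then V else (q:ℝ)/m) := by
      intro j hj
      rcases Nat.eq_zero_or_pos m with rfl | hm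
      · have e0 : (if (0:ℕ) = 0 then V else (q:ℝ)/((0:ℕ):ℝ)) = V := if_pos rfl
        rw [e0]
        split_ifs
        · exact le_refl V
        · exact min_le_left _ _
      · have hm0 : ¬ (m = 0) := by omega
        rw [if_neg hm0]
        have h1 := (hmem j hj).1
        have hm' : (0:ℝ) < (m:ℝ) := by exact_mod_cast hm
        have hpos : (0:ℝ) < (m:ℝ)/q := by positivity
        have hnz : nint (α * ((k*q + j : ℕ):ℝ)) ≠ 0 :=
          ne_of_gt (lt_of_lt_of_le hpos h1)
        rw [if_neg hnz]
        calc min V (1 / nint (α * ((k*q + j : ℕ):ℝ)))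
            ≤ 1 / nint (α * ((k*q + j : ℕ):ℝ)) := min_le_right _ _
        _ ≤ 1/((m:ℝ)/q) := one_div_le_one_div_of_le hpos h1
        _ = (q:ℝ)/m := one_div_div _ _
    have hb : (0:ℝ) ≤ (if m = 0 then V else (q:ℝ)/m) := by
      split_ifs
      · linarith
      · positivity
    calc (∑ j ∈ (Finset.Icc 1 q).filter
          (fun j => ⌊(q:ℝ) * nint (α * ((k*q + j : ℕ):ℝ))⌋₊ = m),
        (if nint (α * ((k*q + j : ℕ):ℝ)) = 0 then V
          else min V (1 / nint (α * ((k*q + j : ℕ):ℝ)))))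
        ≤ ((Finset.Icc 1 q).filter
          (fun j => ⌊(q:ℝ) * nint (α * ((k*q + j : ℕ):ℝ))⌋₊ = m)).card
          • (if m = 0 then V else (q:ℝ)/m) := Finset.sum_le_card_nsmul _ _ _ hterm
    _ = (((Finset.Icc 1 q).filter
          (fun j => ⌊(q:ℝ) * nint (α * ((k*q + j : ℕ):ℝ))⌋₊ = m)).card : ℝ)
          * (if m = 0 then V else (q:ℝ)/m) := nsmul_eq_mul _ _
    _ ≤ 36 * (if m = 0 then V else (q:ℝ)/m) := mul_le_mul_of_nonneg_right hcard hb
  -- sum over fibers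
  calc (∑ m ∈ Finset.range (q+1), ∑ j ∈ (Finset.Icc 1 q).filter
          (fun j => ⌊(q:ℝ) * nint (α * ((k*q + j : ℕ):ℝ))⌋₊ = m),
        (if nint (α * ((k*q + j : ℕ):ℝ)) = 0 then V
          else min V (1 / nint (α * ((k*q + j : ℕ):ℝ)))))
      ≤ ∑ m ∈ Finset.range (q+1), 36 * (if m = 0 then V else (q:ℝ)/m) :=
        Finset.sum_le_sum hfiber
  _ = 36*V + ∑ m ∈ Finset.Icc 1 q, 36*((q:ℝ)/m) := by
      rw [show Finset.range (q+1) = insert 0 (Finset.Icc 1 q) from by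
        ext x; simp only [Finset.mem_insert, Finset.mem_Icc, Finset.mem_range]; omega]
      rw [Finset.sum_insert (by simp)]
      rw [if_pos rfl]
      congr 1
      apply Finset.sum_congr rfl
      intro m hm
      rw [Finset.mem_Icc] at hm
      rw [if_neg (by omega)]
  _ ≤ 36*V + 36*((q:ℝ)*(1 + Real.log q)) := by
      have hH : ∑ m ∈ Finset.Icc 1 q, ((m:ℝ))⁻¹ ≤ 1 + Real.log q := by
        have h := harmonic_le_one_add_log q
        rw [harmonic_eq_sum_Icc] at h
        push_cast at h
        exact h
      have hE : ∑ m ∈ Finset.Icc 1 q, 36*((q:ℝ)/m)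
          = 36*((q:ℝ) * ∑ m ∈ Finset.Icc 1 q, ((m:ℝ))⁻¹) := by
        rw [Finset.mul_sum, Finset.mul_sum]
        apply Finset.sum_congr rfl
        intro m _
        ring
      rw [hE]
      have := mul_le_mul_of_nonneg_left hH (le_of_lt hq')
      linarith

theorem stmt19 :
    ∃ C : ℝ, 0 < C ∧ ∀ (α : ℝ) (a : ℤ) (q : ℕ), 0 < q → Int.gcd a (q : ℤ) = 1 →
      |α - (a : ℝ) / (q : ℝ)| ≤ 1 / (q : ℝ) ^ 2 →
      ∀ N V : ℝ, 1 ≤ N → 1 ≤ V →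
        (∑ u ∈ Finset.Icc 1 ⌊N⌋₊,
            (if nint (α * u) = 0 then V else min V (1 / nint (α * u)))) ≤
          C * (N / q + 1) * (V + q * Real.log q) := by
  refine ⟨108, by norm_num, ?_⟩
  intro α a q hq hg happ N V hN hV
  have hq' : (0:ℝ) < q := by exact_mod_cast hq
  have hq1 : (1:ℝ) ≤ q := by exact_mod_cast hq
  set M := ⌊N⌋₊ with hM
  set B := M / q + 1 with hB
  have hf0 : ∀ u : ℕ, 0 ≤ (if nint (α * u) = 0 then V else min V (1 / nint (α * u))) := by
    intro u
    split_ifs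
    · linarith
    · exact le_min (by linarith) (one_div_nonneg.mpr (nint_nonneg _))
  have hcover : Finset.Icc 1 M ⊆ (Finset.range B).biUnion
      (fun k => Finset.Ioc (k*q) (k*q+q)) := by
    intro u hu
    rw [Finset.mem_Icc] at hu
    rw [Finset.mem_biUnion]
    refine ⟨(u-1)/q, ?_, ?_⟩
    · rw [Finset.mem_range, hB]
      exact Nat.lt_succ_of_le (Nat.div_le_div_right (by omega))
    · rw [Finset.mem_Ioc]
      constructor
      · exact lt_of_le_of_lt (Nat.div_mul_le_self (u-1) q) (by omega)
      · have h2 : u - 1 < ((u-1)/q + 1) * q :=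
          (Nat.div_lt_iff_lt_mul hq).mp (Nat.lt_succ_self _)
        rw [add_mul, one_mul] at h2
        have h3 : u - 1 + 1 ≤ (u-1)/q * q + q := h2
        calc u = u - 1 + 1 := by omega
        _ ≤ (u-1)/q * q + q := h3
  have hdisj : (↑(Finset.range B) : Set ℕ).PairwiseDisjoint
      (fun k => Finset.Ioc (k*q) (k*q+q)) := by
    have key : ∀ k₁ k₂ : ℕ, k₁ < k₂ →
        Disjoint (Finset.Ioc (k₁*q) (k₁*q+q)) (Finset.Ioc (k₂*q) (k₂*q+q)) := by
      intro k₁ k₂ hlt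
      rw [Finset.disjoint_left]
      intro u hu1 hu2
      rw [Finset.mem_Ioc] at hu1 hu2
      have h7 : (k₁+1)*q ≤ k₂*q := Nat.mul_le_mul_right q (by omega)
      rw [add_mul, one_mul] at h7
      exact absurd (lt_of_le_of_lt (le_trans hu1.2 h7) hu2.1) (lt_irrefl u)
    intro k₁ _ k₂ _ hne
    rcases hne.lt_or_gt with h | h
    · exact key k₁ k₂ h
    · exact (key k₂ k₁ h).symm
  have hL0 : 0 ≤ Real.log q := Real.log_nonneg hq1
  have hZ0 : (0:ℝ) ≤ 36*V + 36*((q:ℝ)*(1 + Real.log q)) := by nlinarith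
  have hBle : (B:ℝ) ≤ N/q + 1 := by
    have h1 : ((M/q : ℕ):ℝ) ≤ (M:ℝ)/q := Nat.cast_div_le
    have h2 : (M:ℝ) ≤ N := Nat.floor_le (by linarith)
    rw [hB]
    push_cast
    have h3' : (M:ℝ)/q ≤ N/q := (div_le_div_iff_of_pos_right hq').mpr h2
    linarith
  have hZle : 36*V + 36*((q:ℝ)*(1 + Real.log q)) ≤ 108 * (V + q * Real.log q) := by
    rcases eq_or_lt_of_le hq1 with heq | hgt
    · rw [← heq]
      simp only [Real.log_one]
      nlinarith
    · have h2q : (2:ℝ) ≤ q := by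
        have : 2 ≤ q := by
          by_contra hc
          push_neg at hc
          interval_cases q
          · simp at hgt
        exact_mod_cast this
      have hl2 : (1:ℝ)/2 ≤ Real.log 2 := by
        have := Real.log_two_gt_d9
        linarith
      have hlq : Real.log 2 ≤ Real.log q := Real.log_le_log (by norm_num) h2q
      nlinarith
  calc (∑ u ∈ Finset.Icc 1 M,
        (if nint (α * u) = 0 then V else min V (1 / nint (α * u))))
      ≤ (∑ u ∈ (Finset.range B).biUnion (fun k => Finset.Ioc (k*q) (k*q+q)),
        (if nint (α * u) = 0 then V else min V (1 / nint (α * u)))) :=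
        Finset.sum_le_sum_of_subset_of_nonneg hcover (fun u _ _ => hf0 u)
  _ = ∑ k ∈ Finset.range B, ∑ u ∈ Finset.Ioc (k*q) (k*q+q),
        (if nint (α * u) = 0 then V else min V (1 / nint (α * u))) :=
        Finset.sum_biUnion hdisj
  _ ≤ ∑ _k ∈ Finset.range B, (36*V + 36*((q:ℝ)*(1 + Real.log q))) :=
        Finset.sum_le_sum (fun k _ => block_sum α a q hq hg happ V hV k)
  _ = (B:ℝ) * (36*V + 36*((q:ℝ)*(1 + Real.log q))) := by
        rw [Finset.sum_const, nsmul_eq_mul, Finset.card_range]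
  _ ≤ (N/q + 1) * (36*V + 36*((q:ℝ)*(1 + Real.log q))) :=
        mul_le_mul_of_nonneg_right hBle hZ0
  _ ≤ (N/q + 1) * (108 * (V + q * Real.log q)) := by
        apply mul_le_mul_of_nonneg_left hZle
        have : (0:ℝ) < N/q := by positivity
        linarith
  _ = 108 * (N / q + 1) * (V + q * Real.log q) := by ring
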